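/- For any bounded measurable potential V : ℝ² → ℝ and any a > a*, the Gross-Pitaevskii energy E_a = inf{∫(|∇u|² + V|u|² − (a/2)|u|⁴) : u ∈ H^1(ℝ²), ‖u‖_{L²}=1} equals −∞. -/

import Mathlib

/-!
Along the mass-preserving dilations `u_ℓ = ℓ Q₀(ℓ ·)` the kinetic and the quartic terms both
scale like `ℓ²`, while the potential term stays below `sup |V|`. Since `Q₀` is an optimizer of
the Gagliardo–Nirenberg inequality, the coefficient of `ℓ²` is `1 - a / a* < 0`, so the energy
of `u_ℓ` tends to `-∞` as `ℓ → ∞`.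
-/

open MeasureTheory Filter
open scoped Topology

noncomputable section

abbrev Plane : Type := EuclideanSpace ℝ (Fin 2)

/-- Membership in `H¹(ℝ²)` (with the natural integrability of the quartic term). -/
def H1 (u : Plane → ℝ) : Prop :=
  Differentiable ℝ u ∧ MemLp u 2 ∧ MemLp u 4 ∧ MemLp (fun x => fderiv ℝ u x) 2

section Scaling

variable {E F : Type*} [NormedAddCommGroup E] [NormedSpace ℝ E] [FiniteDimensional ℝ E]
  [MeasurableSpace E] [BorelSpace E] [NormedAddCommGroup F]
  {μ : Measure E} [μ.IsAddHaarMeasure]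

theorem MeasureTheory.MemLp.comp_const_smul {f : E → F} {p : ENNReal} (hf : MemLp f p μ)
    {r : ℝ} (hr : r ≠ 0) : MemLp (fun x => f (r • x)) p μ := by
  refine MemLp.comp_of_map (f := (r • ·)) ?_ (measurable_const_smul r).aemeasurable
  rw [Measure.map_addHaar_smul μ hr]
  exact hf.smul_measure ENNReal.ofReal_ne_top

end Scaling

theorem integral_mul_le_of_abs_le {α : Type*} [MeasurableSpace α] {μ : Measure α}
    {V w : α → ℝ} {C : ℝ} (hV : ∀ x, |V x| ≤ C) (hw : 0 ≤ w) (hwi : Integrable w μ) :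
    ∫ x, V x * w x ∂μ ≤ C * ∫ x, w x ∂μ :=
  calc ∫ x, V x * w x ∂μ ≤ ‖∫ x, V x * w x ∂μ‖ := Real.le_norm_self _
    _ ≤ ∫ x, C * w x ∂μ := norm_integral_le_of_norm_le (hwi.const_mul C) <|
        ae_of_all _ fun x => by
          rw [norm_mul, Real.norm_eq_abs, Real.norm_of_nonneg (hw x)]
          exact mul_le_mul_of_nonneg_right (hV x) (hw x)
    _ = C * ∫ x, w x ∂μ := integral_const_mul C w

theorem integral_mul_comp_smul_plane (g : Plane → ℝ) (c : ℝ) {ℓ : ℝ} (hℓ : 0 ≤ ℓ) :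
    ∫ x : Plane, c * g (ℓ • x) = c / ℓ ^ 2 * ∫ x : Plane, g x := by
  rw [integral_const_mul, Measure.integral_comp_smul_of_nonneg volume g ℓ (hR := hℓ),
    finrank_euclideanSpace_fin, smul_eq_mul, div_eq_mul_inv, mul_assoc]

def massDilate (ℓ : ℝ) (Q : Plane → ℝ) : Plane → ℝ := fun x => ℓ * Q (ℓ • x)

variable {Q : Plane → ℝ} {ℓ : ℝ}

theorem fderiv_massDilate (x : Plane) :
    fderiv ℝ (massDilate ℓ Q) x = (ℓ * ℓ) • fderiv ℝ Q (ℓ • x) := by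
  change fderiv ℝ (ℓ • fun y => Q (ℓ • y)) x = _
  rw [fderiv_const_smul_field, Pi.smul_apply, fderiv_comp_smul, smul_smul]

theorem H1.massDilate (hQ : H1 Q) (hℓ : ℓ ≠ 0) : H1 (massDilate ℓ Q) := by
  obtain ⟨hdiff, h2, h4, hgrad⟩ := hQ
  refine ⟨(hdiff.comp (differentiable_id.const_smul ℓ)).const_mul ℓ,
    (h2.comp_const_smul hℓ).const_mul ℓ, (h4.comp_const_smul hℓ).const_mul ℓ, ?_⟩
  simp_rw [fderiv_massDilate]
  exact (hgrad.comp_const_smul hℓ).const_smul (ℓ * ℓ)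

theorem H1.integrable_sq {u : Plane → ℝ} (hu : H1 u) : Integrable (fun x => u x ^ 2) :=
  (memLp_two_iff_integrable_sq hu.1.continuous.aestronglyMeasurable).1 hu.2.1

theorem integral_massDilate_sq (hℓ : 0 < ℓ) :
    ∫ x : Plane, massDilate ℓ Q x ^ 2 = ∫ x : Plane, Q x ^ 2 := by
  simp_rw [massDilate, mul_pow]
  rw [integral_mul_comp_smul_plane (fun y => Q y ^ 2) _ hℓ.le, div_self (by positivity), one_mul]

theorem integral_massDilate_pow_four (hℓ : 0 < ℓ) :
    ∫ x : Plane, massDilate ℓ Q x ^ 4 = ℓ ^ 2 * ∫ x : Plane, Q x ^ 4 := by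
  simp_rw [massDilate, mul_pow]
  rw [integral_mul_comp_smul_plane (fun y => Q y ^ 4) _ hℓ.le]
  field_simp

theorem integral_norm_fderiv_massDilate_sq (hℓ : 0 < ℓ) :
    ∫ x : Plane, ‖fderiv ℝ (massDilate ℓ Q) x‖ ^ 2 = ℓ ^ 2 * ∫ x : Plane, ‖fderiv ℝ Q x‖ ^ 2 := by
  simp_rw [fderiv_massDilate, norm_smul, Real.norm_of_nonneg (mul_self_nonneg ℓ), mul_pow]
  rw [integral_mul_comp_smul_plane (fun y => ‖fderiv ℝ Q y‖ ^ 2) _ hℓ.le]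
  field_simp

/-- The Gross–Pitaevskii functional `E_a` of the paper. -/
def gpEnergy (V : Plane → ℝ) (a : ℝ) (u : Plane → ℝ) : ℝ :=
  (∫ x : Plane, ‖fderiv ℝ u x‖ ^ 2) + (∫ x : Plane, V x * (u x) ^ 2)
    - a / 2 * (∫ x : Plane, (u x) ^ 4)

theorem gpEnergy_massDilate_le {V : Plane → ℝ} {C : ℝ} (hV : ∀ x, |V x| ≤ C) (a : ℝ)
    (hQ : H1 Q) (hℓ : 0 < ℓ) :
    gpEnergy V a (massDilate ℓ Q) ≤
      ℓ ^ 2 * ((∫ x : Plane, ‖fderiv ℝ Q x‖ ^ 2) - a / 2 * ∫ x : Plane, Q x ^ 4)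
        + C * ∫ x : Plane, Q x ^ 2 := by
  have hpot := integral_mul_le_of_abs_le hV (fun x => sq_nonneg (massDilate ℓ Q x))
    (hQ.massDilate hℓ.ne').integrable_sq
  rw [integral_massDilate_sq hℓ] at hpot
  rw [gpEnergy, integral_norm_fderiv_massDilate_sq hℓ, integral_massDilate_pow_four hℓ]
  linarith

theorem gp_energy_neg_infinity_with_potential_general (V : Plane → ℝ)
    (C : ℝ) (hVbdd : ∀ x, |V x| ≤ C)
    (astar a : ℝ) (hastar : 0 < astar) (ha : astar < a)
    (Q₀ : Plane → ℝ) (hQ₀ : H1 Q₀)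
    (hQ₀norm : ∫ x : Plane, (Q₀ x) ^ 2 = 1)
    (hQ₀grad : ∫ x : Plane, ‖fderiv ℝ Q₀ x‖ ^ 2 = 1)
    (hQ₀4 : astar / 2 * ∫ x : Plane, (Q₀ x) ^ 4 = 1) :
    ∀ c : ℝ, ∃ u : Plane → ℝ, H1 u ∧ (∫ x : Plane, (u x) ^ 2 = 1) ∧
      (∫ x : Plane, ‖fderiv ℝ u x‖ ^ 2) + (∫ x : Plane, V x * (u x) ^ 2)
        - a / 2 * (∫ x : Plane, (u x) ^ 4) < c := by
  intro c
  have hquartic : a / 2 * ∫ x : Plane, Q₀ x ^ 4 = a / astar := by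
    rw [← mul_one (a / astar), ← hQ₀4]
    field_simp
  have hslope : 1 - a / astar < 0 := by
    rw [sub_neg, one_lt_div hastar]
    exact ha
  have hbound : Tendsto (fun ℓ : ℝ => ℓ ^ 2 * (1 - a / astar) + C) atTop atBot :=
    tendsto_atBot_add_const_right _ C
      ((tendsto_pow_atTop two_ne_zero).atTop_mul_const_of_neg hslope)
  obtain ⟨ℓ, hℓc, hℓ⟩ :=
    ((hbound.eventually (eventually_lt_atBot c)).and (eventually_gt_atTop 0)).exists
  refine ⟨massDilate ℓ Q₀, hQ₀.massDilate hℓ.ne', by rw [integral_massDilate_sq hℓ, hQ₀norm], ?_⟩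
  calc gpEnergy V a (massDilate ℓ Q₀) ≤ ℓ ^ 2 * (1 - a / astar) + C * 1 := by
        simpa only [hQ₀grad, hquartic, hQ₀norm] using gpEnergy_massDilate_le hVbdd a hQ₀ hℓ
    _ < c := by rwa [mul_one]

/-- For any bounded measurable potential `V` and `a > a*` (the optimal Gagliardo–Nirenberg
constant, with normalized optimizer `Q₀`), the Gross-Pitaevskii ground state energy
`E_a = inf {∫(|∇u|² + V|u|² − (a/2)|u|⁴) : ‖u‖_{L²} = 1}` equals `−∞`. -/
theorem gp_energy_neg_infinity_with_potential (V : Plane → ℝ) (hVmeas : Measurable V)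
    (C : ℝ) (hVbdd : ∀ x, |V x| ≤ C)
    (astar a : ℝ) (hastar : 0 < astar) (ha : astar < a)
    (hGN : ∀ u : Plane → ℝ, H1 u →
      astar / 2 * ∫ x : Plane, (u x) ^ 4
        ≤ (∫ x : Plane, ‖fderiv ℝ u x‖ ^ 2) * ∫ x : Plane, (u x) ^ 2)
    (Q₀ : Plane → ℝ) (hQ₀ : H1 Q₀)
    (hQ₀norm : ∫ x : Plane, (Q₀ x) ^ 2 = 1)
    (hQ₀grad : ∫ x : Plane, ‖fderiv ℝ Q₀ x‖ ^ 2 = 1)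
    (hQ₀4 : astar / 2 * ∫ x : Plane, (Q₀ x) ^ 4 = 1) :
    ∀ c : ℝ, ∃ u : Plane → ℝ, H1 u ∧ (∫ x : Plane, (u x) ^ 2 = 1) ∧
      (∫ x : Plane, ‖fderiv ℝ u x‖ ^ 2) + (∫ x : Plane, V x * (u x) ^ 2)
        - a / 2 * (∫ x : Plane, (u x) ^ 4) < c :=
  gp_energy_neg_infinity_with_potential_general V C hVbdd astar a hastar ha Q₀ hQ₀ hQ₀norm hQ₀grad
    hQ₀4
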